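/- arXiv:2112.10112 — 3 statements merged into one kernel-verified Lean document; each statement's English description precedes it below -/
import Mathlib

section
/- Let V be a real inner product space of dimension 2n+1 (n ≥ 1) equipped with an almost contact metric structure (φ, ξ, η). If Q is a self-adjoint linear endomorphism of V satisfying Qξ = 2nξ and Qφ + φQ = 4nφ, then the trace of Q equals 2n(2n+1). -/
/-!
Since `φ² = -1 + ξ ⊗ ξ`, the trace of `Q` is `-tr (Q φ²) + ⟪ξ, Q ξ⟫`. Composing `Qφ + φQ = 4n φ`
with `φ` and using cyclicity of the trace gives `2 tr (Q φ²) = 4n tr φ² = 4n · (-2n)`, hence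
`tr Q = 4n² + 2n`.
-/

open RealInnerProductSpace LinearMap

theorem LinearMap.two_mul_trace_comp_comp_of_anticomm {R M : Type*} [CommRing R]
    [AddCommGroup M] [Module R M] [Module.Free R M] [Module.Finite R M]
    {Q φ : M →ₗ[R] M} {c : R} (h : Q ∘ₗ φ + φ ∘ₗ Q = c • φ) :
    2 * trace R M (Q ∘ₗ φ ∘ₗ φ) = c * trace R M (φ ∘ₗ φ) := by
  have hcyc : trace R M (φ ∘ₗ Q ∘ₗ φ) = trace R M (Q ∘ₗ φ ∘ₗ φ) := by
    rw [trace_comp_comm', comp_assoc]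
  have := congrArg (fun A => trace R M (A ∘ₗ φ)) h
  simp only [add_comp, smul_comp, comp_assoc, map_add, map_smul, hcyc, smul_eq_mul] at this
  rw [two_mul, this]

theorem LinearMap.trace_eq_neg_trace_comp_comp_add_inner {V : Type*} [NormedAddCommGroup V]
    [InnerProductSpace ℝ V] [FiniteDimensional ℝ V] {φ : V →ₗ[ℝ] V} {ξ : V}
    (hφ2 : ∀ x : V, φ (φ x) = -x + ⟪x, ξ⟫ • ξ) (Q : V →ₗ[ℝ] V) :
    trace ℝ V Q = -trace ℝ V (Q ∘ₗ φ ∘ₗ φ) + ⟪ξ, Q ξ⟫ := by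
  have hcomp : Q ∘ₗ φ ∘ₗ φ = -Q + (innerₗ V ξ).smulRight (Q ξ) := by
    ext x
    simp [hφ2, real_inner_comm]
  rw [hcomp, map_add, map_neg, trace_smulRight, innerₗ_apply_apply]
  ring

theorem stmt_0_general {V : Type*} [NormedAddCommGroup V] [InnerProductSpace ℝ V]
    [FiniteDimensional ℝ V] (n : ℕ)
    (hdim : Module.finrank ℝ V = 2 * n + 1)
    (φ : V →ₗ[ℝ] V) (ξ : V)
    (hηξ : ⟪ξ, ξ⟫ = 1)
    (hφ2 : ∀ x : V, φ (φ x) = -x + ⟪x, ξ⟫ • ξ)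
    (Q : V →ₗ[ℝ] V)
    (hQξ : Q ξ = ((2 * n : ℕ) : ℝ) • ξ)
    (hQφ : Q ∘ₗ φ + φ ∘ₗ Q = ((4 * n : ℕ) : ℝ) • φ) :
    LinearMap.trace ℝ V Q = 2 * (n : ℝ) * (2 * (n : ℝ) + 1) := by
  have htrφφ : trace ℝ V (φ ∘ₗ φ) = -(2 * n) := by
    have := trace_eq_neg_trace_comp_comp_add_inner hφ2 LinearMap.id
    rw [trace_id, hdim, id_comp, id_apply, hηξ] at this
    push_cast at this
    linarith
  have htrQφφ := two_mul_trace_comp_comp_of_anticomm hQφ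
  rw [htrφφ] at htrQφφ
  rw [trace_eq_neg_trace_comp_comp_add_inner hφ2, hQξ, real_inner_smul_right, hηξ]
  push_cast at htrQφφ ⊢
  linear_combination (-1 / 2 : ℝ) * htrQφφ

/-- On a real inner product space of dimension 2n+1 (n ≥ 1) with an
almost contact metric structure (φ, ξ, η) (where η x = ⟪x, ξ⟫), a self-adjoint
endomorphism Q with Qξ = 2nξ and Qφ + φQ = 4nφ has trace 2n(2n+1). -/
theorem stmt_0 {V : Type*} [NormedAddCommGroup V] [InnerProductSpace ℝ V]
    [FiniteDimensional ℝ V] (n : ℕ) (hn : 1 ≤ n)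
    (hdim : Module.finrank ℝ V = 2 * n + 1)
    (φ : V →ₗ[ℝ] V) (ξ : V)
    (hηξ : ⟪ξ, ξ⟫ = 1)
    (hφ2 : ∀ x : V, φ (φ x) = -x + ⟪x, ξ⟫ • ξ)
    (hmet : ∀ x y : V, ⟪φ x, φ y⟫ = ⟪x, y⟫ - ⟪x, ξ⟫ * ⟪y, ξ⟫)
    (Q : V →ₗ[ℝ] V)
    (hQsa : ∀ x y : V, ⟪Q x, y⟫ = ⟪x, Q y⟫)
    (hQξ : Q ξ = ((2 * n : ℕ) : ℝ) • ξ)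
    (hQφ : Q ∘ₗ φ + φ ∘ₗ Q = ((4 * n : ℕ) : ℝ) • φ) :
    LinearMap.trace ℝ V Q = 2 * (n : ℝ) * (2 * (n : ℝ) + 1) :=
  stmt_0_general n hdim φ ξ hηξ hφ2 Q hQξ hQφ
end

section
/- Let V be a real inner product space of dimension 2n+1 (n ≥ 1) equipped with an almost contact metric structure (φ, ξ, η), let Q be a self-adjoint linear endomorphism of V with Qξ = 2nξ, let f be a nonzero real number, and let α, β : V → ℝ be linear functionals. Suppose that for all x, y ∈ V: (2n−1)(α(x)η(y) − α(y)η(x)) + (β(y)η(x) − β(x)η(y)) + 8n·f·⟨φx, y⟩ + 2f·⟨(Qφ + φQ)y, x⟩ = 0. Then Qφ + φQ = 4n·φ. -/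
open RealInnerProductSpace

/-- On a real inner product space of dimension 2n+1 (n ≥ 1) with an
almost contact metric structure (φ, ξ, η), let Q be self-adjoint with Qξ = 2nξ,
f ≠ 0 a real number, and α, β linear functionals. If for all x, y:
(2n−1)(α(x)η(y) − α(y)η(x)) + (β(y)η(x) − β(x)η(y)) + 8nf⟪φx, y⟫
  + 2f⟪(Qφ + φQ)y, x⟫ = 0,
then Qφ + φQ = 4nφ. -/
theorem stmt_5 {V : Type*} [NormedAddCommGroup V] [InnerProductSpace ℝ V]
    [FiniteDimensional ℝ V] (n : ℕ) (hn : 1 ≤ n)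
    (hdim : Module.finrank ℝ V = 2 * n + 1)
    (φ : V →ₗ[ℝ] V) (ξ : V)
    (hηξ : ⟪ξ, ξ⟫ = 1)
    (hφ2 : ∀ x : V, φ (φ x) = -x + ⟪x, ξ⟫ • ξ)
    (hmet : ∀ x y : V, ⟪φ x, φ y⟫ = ⟪x, y⟫ - ⟪x, ξ⟫ * ⟪y, ξ⟫)
    (Q : V →ₗ[ℝ] V)
    (hQsa : ∀ x y : V, ⟪Q x, y⟫ = ⟪x, Q y⟫)
    (hQξ : Q ξ = ((2 * n : ℕ) : ℝ) • ξ)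
    (f : ℝ) (hf : f ≠ 0)
    (α β : V →ₗ[ℝ] ℝ)
    (h : ∀ x y : V,
      (2 * (n : ℝ) - 1) * (α x * ⟪y, ξ⟫ - α y * ⟪x, ξ⟫)
        + (β y * ⟪x, ξ⟫ - β x * ⟪y, ξ⟫)
        + 8 * (n : ℝ) * f * ⟪φ x, y⟫
        + 2 * f * ⟪(Q ∘ₗ φ + φ ∘ₗ Q) y, x⟫ = 0) :
    Q ∘ₗ φ + φ ∘ₗ Q = (4 * (n : ℝ)) • φ := by
  have hφξ : φ ξ = 0 := by
    have h0 : ⟪φ ξ, φ ξ⟫ = 0 := by rw [hmet, hηξ]; ring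
    exact inner_self_eq_zero.mp h0
  have hηφφ : ∀ y : V, ⟪φ (φ y), ξ⟫ = 0 := by
    intro y
    rw [hφ2, inner_add_left, inner_neg_left, real_inner_smul_left, hηξ]
    ring
  have hηφ : ∀ x : V, ⟪φ x, ξ⟫ = 0 := by
    intro x
    have h3 : φ (φ (φ x)) = -φ x := by
      have := congrArg φ (hφ2 x)
      simpa [map_add, map_neg, map_smul, hφξ] using this
    have h4 := hηφφ (φ x)
    rw [h3, inner_neg_left] at h4
    linarith
  have hskew : ∀ x y : V, ⟪φ x, y⟫ = -⟪x, φ y⟫ := by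
    intro x y
    have h1 := hmet x (φ y)
    rw [hφ2 y, hηφ y, inner_add_right, inner_neg_right, real_inner_smul_right,
      hηφ x] at h1
    linarith
  have hηφ' : ∀ x : V, ⟪ξ, φ x⟫ = 0 := fun x => by
    rw [real_inner_comm]; exact hηφ x
  refine LinearMap.ext fun x => ext_inner_right ℝ fun y => ?_
  simp only [LinearMap.add_apply, LinearMap.comp_apply, LinearMap.smul_apply,
    inner_add_left, real_inner_smul_left]
  have key := h (φ x) (φ y)
  simp only [LinearMap.add_apply, LinearMap.comp_apply, hηφ, mul_zero, zero_mul,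
    sub_zero, zero_sub, mul_neg, neg_zero, add_zero, zero_add, sub_self,
    inner_add_left] at key
  have e1 : ⟪φ (φ x), φ y⟫ = ⟪φ x, y⟫ := by
    rw [hφ2 x, inner_add_left, inner_neg_left, real_inner_smul_left, hηφ' y,
      hskew x y]
    ring
  have e2 : ⟪Q (φ (φ y)), φ x⟫ = -⟪Q (φ x), y⟫ := by
    rw [hφ2 y, map_add, map_neg, map_smul, hQξ, inner_add_left, inner_neg_left,
      real_inner_smul_left, real_inner_smul_left, hηφ' x, hQsa y (φ x),
      real_inner_comm y (Q (φ x))]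
    ring
  have e3 : ⟪φ (Q (φ y)), φ x⟫ = -⟪φ (Q x), y⟫ := by
    have hQφyξ : ⟪Q (φ y), ξ⟫ = 0 := by
      rw [hQsa (φ y) ξ, hQξ, real_inner_smul_right, hηφ y]; ring
    rw [hmet, hQφyξ, hQsa (φ y) x, hskew y (Q x), real_inner_comm y (φ (Q x))]
    ring
  rw [e1, e2, e3] at key
  have hz : 2 * f * (⟪Q (φ x), y⟫ + ⟪φ (Q x), y⟫ - 4 * (n : ℝ) * ⟪φ x, y⟫) = 0 := by
    linarith
  have h2f : (2 : ℝ) * f ≠ 0 := mul_ne_zero two_ne_zero hf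
  have := (mul_eq_zero.mp hz).resolve_left h2f
  linarith
end

section
/- Let V be a real inner product space of dimension 2n+1 (n ≥ 1) equipped with an almost contact metric structure (φ, ξ, η), let κ, μ be real numbers, and let h be a linear endomorphism of V with hξ = 0, hφ = −φh, and h∘h = (κ−1)·φ∘φ. Define the endomorphism Q by Qx = [2(n−1) − nμ]x + [2(n−1) + μ]h x + [2(1−n) + n(2κ+μ)]η(x)ξ. If Qφ + φQ − φQh − hQφ = 4nκ·φ, then μ(n+1) = κ(μ−2). -/
/-!
Write `Q = a I + b h + c η ⊗ ξ`. The identity `φ² = -I + η ⊗ ξ` forces `φ ξ = 0` and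
`η ∘ φ = 0`, hence `φ³ = -φ`; with `hφ = -φh` and `h² = (κ - 1) φ²` every term of
`Qφ + φQ - φQh - hQφ` reduces to a multiple of `φ` or of `φh`, the `φh` terms cancel, and the
operator equals `2 (a + b (κ - 1)) φ`. Since `φ ≠ 0` once `dim V ≥ 2`, comparing with `4nκ φ`
gives `a + b (κ - 1) = 2nκ`, which is the claimed relation.
-/

open RealInnerProductSpace Module

namespace AlmostContact

variable {K V : Type*} [Field K] [AddCommGroup V] [Module K V]
  {φ : V →ₗ[K] V} {ξ : V} {η : Dual K V}

lemma ne_zero_of_eta_apply_eq_one (hηξ : η ξ = 1) : ξ ≠ 0 := by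
  rintro rfl
  simp at hηξ

/-- Compute `φ³ ξ` in two ways: it is `φ (φ² ξ) = 0` and `φ² (φ ξ) = -φ ξ + η (φ ξ) • ξ`. -/
lemma apply_xi_eq_zero (hηξ : η ξ = 1) (hφ2 : ∀ x, φ (φ x) = -x + η x • ξ) : φ ξ = 0 := by
  have hφ2ξ : φ (φ ξ) = 0 := by rw [hφ2, hηξ, one_smul, neg_add_cancel]
  have hφξ : φ ξ = η (φ ξ) • ξ := by
    have := hφ2 (φ ξ)
    rw [hφ2ξ, map_zero] at this
    linear_combination (norm := module) this
  have hsq : (η (φ ξ) * η (φ ξ)) • ξ = 0 := by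
    rw [mul_smul, ← hφξ, ← map_smul, ← hφξ, hφ2ξ]
  have ht : η (φ ξ) = 0 :=
    mul_self_eq_zero.mp ((smul_eq_zero.mp hsq).resolve_right (ne_zero_of_eta_apply_eq_one hηξ))
  rw [hφξ, ht, zero_smul]

lemma eta_apply_eq_zero (hηξ : η ξ = 1) (hφ2 : ∀ x, φ (φ x) = -x + η x • ξ) (x : V) :
    η (φ x) = 0 := by
  have hcomm := hφ2 (φ x)
  rw [hφ2 x, map_add, map_neg, map_smul, apply_xi_eq_zero hηξ hφ2, smul_zero, add_zero,
    left_eq_add] at hcomm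
  exact (smul_eq_zero.mp hcomm).resolve_right (ne_zero_of_eta_apply_eq_one hηξ)

lemma apply_apply_apply_eq_neg (hηξ : η ξ = 1) (hφ2 : ∀ x, φ (φ x) = -x + η x • ξ) (x : V) :
    φ (φ (φ x)) = -φ x := by
  rw [hφ2, eta_apply_eq_zero hηξ hφ2, zero_smul, add_zero]

lemma ne_zero_of_two_le_finrank (hφ2 : ∀ x, φ (φ x) = -x + η x • ξ) (hV : 2 ≤ finrank K V) :
    φ ≠ 0 := by
  intro hφ
  have hrank : finrank K V ≤ 1 := finrank_le_one ξ fun w => ⟨η w, by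
    have := hφ2 w
    simp only [hφ, LinearMap.zero_apply] at this
    linear_combination (norm := module) -this⟩
  omega

lemma comp_add_comp_sub_comp_sub_comp_eq_smul (hηξ : η ξ = 1)
    (hφ2 : ∀ x, φ (φ x) = -x + η x • ξ) {h Q : V →ₗ[K] V} {κ a b c : K}
    (hhφ : h ∘ₗ φ = -(φ ∘ₗ h)) (hh2 : h ∘ₗ h = (κ - 1) • (φ ∘ₗ φ))
    (hQ : ∀ x, Q x = a • x + b • h x + c • (η x • ξ)) :
    Q ∘ₗ φ + φ ∘ₗ Q - φ ∘ₗ Q ∘ₗ h - h ∘ₗ Q ∘ₗ φ = (2 * (a + b * (κ - 1))) • φ := by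
  have hhφx (x : V) : h (φ x) = -φ (h x) := LinearMap.congr_fun hhφ x
  have hh2x (x : V) : h (h x) = (κ - 1) • φ (φ x) := LinearMap.congr_fun hh2 x
  ext x
  simp only [LinearMap.add_apply, LinearMap.sub_apply, LinearMap.comp_apply,
    LinearMap.smul_apply, hQ, map_add, map_smul, map_neg, hhφx, hh2x,
    eta_apply_eq_zero hηξ hφ2, apply_xi_eq_zero hηξ hφ2, apply_apply_apply_eq_neg hηξ hφ2]
  module

end AlmostContact

theorem stmt_6_general {V : Type*} [NormedAddCommGroup V] [InnerProductSpace ℝ V]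
    (n : ℕ) (hn : 1 ≤ n)
    (hdim : Module.finrank ℝ V = 2 * n + 1)
    (φ : V →ₗ[ℝ] V) (ξ : V)
    (hηξ : ⟪ξ, ξ⟫ = 1)
    (hφ2 : ∀ x : V, φ (φ x) = -x + ⟪x, ξ⟫ • ξ)
    (κ μ : ℝ) (h : V →ₗ[ℝ] V)
    (hhφ : h ∘ₗ φ = -(φ ∘ₗ h))
    (hh2 : h ∘ₗ h = (κ - 1) • (φ ∘ₗ φ))
    (Q : V →ₗ[ℝ] V)
    (hQ : ∀ x : V, Q x = (2 * ((n : ℝ) - 1) - (n : ℝ) * μ) • x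
        + (2 * ((n : ℝ) - 1) + μ) • h x
        + (2 * (1 - (n : ℝ)) + (n : ℝ) * (2 * κ + μ)) • (⟪x, ξ⟫ • ξ))
    (heq : Q ∘ₗ φ + φ ∘ₗ Q - φ ∘ₗ Q ∘ₗ h - h ∘ₗ Q ∘ₗ φ
        = (4 * (n : ℝ) * κ) • φ) :
    μ * ((n : ℝ) + 1) = κ * (μ - 2) := by
  let η : Dual ℝ V := (innerₗ V).flip ξ
  rw [AlmostContact.comp_add_comp_sub_comp_sub_comp_eq_smul (η := η) hηξ hφ2 hhφ hh2 hQ] at heq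
  have hφ : φ ≠ 0 := AlmostContact.ne_zero_of_two_le_finrank (η := η) hφ2 (by omega)
  have hcoeff := smul_left_injective ℝ hφ heq
  linear_combination -hcoeff / 2

/-- On a real inner product space of dimension 2n+1 (n ≥ 1) with an
almost contact metric structure (φ, ξ, η), let κ, μ ∈ ℝ and h a linear
endomorphism with hξ = 0, hφ = −φh, h² = (κ−1)φ². Define
Qx = [2(n−1) − nμ]x + [2(n−1) + μ]hx + [2(1−n) + n(2κ+μ)]η(x)ξ.
If Qφ + φQ − φQh − hQφ = 4nκφ, then μ(n+1) = κ(μ−2). -/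
theorem stmt_6 {V : Type*} [NormedAddCommGroup V] [InnerProductSpace ℝ V]
    [FiniteDimensional ℝ V] (n : ℕ) (hn : 1 ≤ n)
    (hdim : Module.finrank ℝ V = 2 * n + 1)
    (φ : V →ₗ[ℝ] V) (ξ : V)
    (hηξ : ⟪ξ, ξ⟫ = 1)
    (hφ2 : ∀ x : V, φ (φ x) = -x + ⟪x, ξ⟫ • ξ)
    (hmet : ∀ x y : V, ⟪φ x, φ y⟫ = ⟪x, y⟫ - ⟪x, ξ⟫ * ⟪y, ξ⟫)
    (κ μ : ℝ) (h : V →ₗ[ℝ] V)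
    (hhξ : h ξ = 0)
    (hhφ : h ∘ₗ φ = -(φ ∘ₗ h))
    (hh2 : h ∘ₗ h = (κ - 1) • (φ ∘ₗ φ))
    (Q : V →ₗ[ℝ] V)
    (hQ : ∀ x : V, Q x = (2 * ((n : ℝ) - 1) - (n : ℝ) * μ) • x
        + (2 * ((n : ℝ) - 1) + μ) • h x
        + (2 * (1 - (n : ℝ)) + (n : ℝ) * (2 * κ + μ)) • (⟪x, ξ⟫ • ξ))
    (heq : Q ∘ₗ φ + φ ∘ₗ Q - φ ∘ₗ Q ∘ₗ h - h ∘ₗ Q ∘ₗ φ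
        = (4 * (n : ℝ) * κ) • φ) :
    μ * ((n : ℝ) + 1) = κ * (μ - 2) :=
  stmt_6_general n hn hdim φ ξ hηξ hφ2 κ μ h hhφ hh2 Q hQ heq
end
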